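/- arXiv:2307.00561 — 3 statements merged into one kernel-verified Lean document; each statement's English description precedes it below -/
import Mathlib

section
/- Let S, S9bf : Fin 16 → Fin 16 have value lists [6, 5, 12, 10, 1, 14, 7, 9, 11, 0, 3, 13, 8, 15, 4, 2] and [3, 0, 13, 11, 0, 15, 2, 12, 14, 5, 2, 12, 9, 14, 1, 7] respectively, and let parity : Fin 16 → Bool map v to the parity of the number of ones in the 4-bit representation of v. Then: (i) for every x in {0, 1, 6, 7, 8, 9, 14, 15}, S9bf x ≠ S x and parity (S9bf x) = parity (S x); (ii) for every x not in that set, parity (S9bf x) ≠ parity (S x). Hence there exists an input on which the bit-flip fault on s9 changes the S-box output without changing its parity, so a single-bit parity countermeasure fails to detect this effective fault. -/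
def rectS : Fin 16 → Fin 16 :=
  ![6, 5, 12, 10, 1, 14, 7, 9, 11, 0, 3, 13, 8, 15, 4, 2]

def rectS9bf : Fin 16 → Fin 16 :=
  ![3, 0, 13, 11, 0, 15, 2, 12, 14, 5, 2, 12, 9, 14, 1, 7]

/-- Hamming-weight parity of the 4-bit representation of `v`. -/
def par4 (v : Fin 16) : Bool :=
  Bool.xor (Bool.xor (v.val.testBit 3) (v.val.testBit 2))
    (Bool.xor (v.val.testBit 1) (v.val.testBit 0))

theorem s9_bitflip_parity_escape :
    (∀ x ∈ ({0, 1, 6, 7, 8, 9, 14, 15} : Finset (Fin 16)),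
        rectS9bf x ≠ rectS x ∧ par4 (rectS9bf x) = par4 (rectS x)) ∧
    (∀ x : Fin 16, x ∉ ({0, 1, 6, 7, 8, 9, 14, 15} : Finset (Fin 16)) →
        par4 (rectS9bf x) ≠ par4 (rectS x)) ∧
    (∃ x : Fin 16, rectS9bf x ≠ rectS x ∧ par4 (rectS9bf x) = par4 (rectS x)) := by
  refine ⟨by decide, by decide, ⟨0, by decide⟩⟩
end

section
/- Define p6 : Bool → Bool → Bool → Bool → Bool by p6 a b c d = (a && !(c XOR d)) || (!((a || c) && d) && b), and let parity : Fin 16 → Bool map v to the parity (XOR) of the four bits of v. Let S : Fin 16 → Fin 16 be given by the value list [6, 5, 12, 10, 1, 14, 7, 9, 11, 0, 3, 13, 8, 15, 4, 2]. Then for all a b c d : Bool, p6 a b c d = parity (S (8·a + 4·b + 2·c + d)) (Booleans coerced to 0/1). Consequently, in the fault-free protected circuit, the error flag flag = p6 ⊕ w ⊕ x ⊕ y ⊕ z is always false. -/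
/-- The redundantly computed parity bit of the S-box output. -/
def p6 (a b c d : Bool) : Bool :=
  (a && !(Bool.xor c d)) || (!((a || c) && d) && b)

/-!
The redundancy bit `p6` is, by exhaustive check over the 16 inputs, the parity of the S-box
output. The main circuit's outputs `w x y z` are exactly the bits of that output, so
`w ⊕ x ⊕ y ⊕ z` is the same parity and the flag `p6 ⊕ w ⊕ x ⊕ y ⊕ z` cancels to `false`.
-/

open Fin.NatCast

def fromBits (a b c d : Bool) : Fin 16 :=
  ((8 * a.toNat + 4 * b.toNat + 2 * c.toNat + d.toNat : ℕ) : Fin 16)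

def rectCircuit (a b c d : Bool) : Fin 16 :=
  let z := Bool.xor (Bool.xor a b) (!c && d)
  let y := Bool.xor b (Bool.xor (!c || a) d)
  let x := Bool.xor ((Bool.xor b c) || z) (Bool.xor (!c || a) d)
  let w := Bool.xor (Bool.xor b c) ((Bool.xor a b) && (Bool.xor (!c || a) d))
  fromBits w x y z

theorem par4_fromBits (a b c d : Bool) :
    par4 (fromBits a b c d) = Bool.xor (Bool.xor a b) (Bool.xor c d) := by
  revert a b c d; decide

theorem rectCircuit_eq_rectS (a b c d : Bool) :
    rectCircuit a b c d = rectS (fromBits a b c d) := by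
  revert a b c d; decide

theorem p6_eq_par4_rectS (a b c d : Bool) :
    p6 a b c d = par4 (rectS (fromBits a b c d)) := by
  revert a b c d; decide

theorem p6_computes_parity (a b c d : Bool) :
    let z := Bool.xor (Bool.xor a b) (!c && d)
    let y := Bool.xor b (Bool.xor (!c || a) d)
    let x := Bool.xor ((Bool.xor b c) || z) (Bool.xor (!c || a) d)
    let w := Bool.xor (Bool.xor b c) ((Bool.xor a b) && (Bool.xor (!c || a) d))
    p6 a b c d = par4 (rectS ((8 * a.toNat + 4 * b.toNat + 2 * c.toNat + d.toNat : ℕ) : Fin 16)) ∧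
    Bool.xor (p6 a b c d) (Bool.xor (Bool.xor w x) (Bool.xor y z)) = false := by
  intro z y x w
  have hout : fromBits w x y z = rectS (fromBits a b c d) := rectCircuit_eq_rectS a b c d
  refine ⟨p6_eq_par4_rectS a b c d, ?_⟩
  rw [← par4_fromBits, hout, ← p6_eq_par4_rectS, Bool.xor_self]
end

section
/- Let S, S9s : Fin 16 → Fin 16 have value lists [6, 5, 12, 10, 1, 14, 7, 9, 11, 0, 3, 13, 8, 15, 4, 2] and [3, 5, 13, 11, 1, 15, 7, 9, 11, 5, 3, 13, 9, 15, 1, 7] respectively, and let parity : Fin 16 → Bool map v to the XOR of its four bits. Then for every x in {0, 9, 14, 15}: S9s x ≠ S x and parity (S9s x) = parity (S x); and for every x in Fin 16, if S9s x ≠ S x and parity (S9s x) = parity (S x) then x ∈ {0, 9, 14, 15}. Hence the set fault on gate s9 defeats the single-bit parity countermeasure exactly on the inputs 0000, 1001, 1110, 1111. -/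
/-- The RECTANGLE S-box with a set fault injected on gate `s9`. -/
def rectS9s : Fin 16 → Fin 16 :=
  ![3, 5, 13, 11, 1, 15, 7, 9, 11, 5, 3, 13, 9, 15, 1, 7]

theorem s9_set_fault_escapes_exactly :
    (∀ x ∈ ({0, 9, 14, 15} : Finset (Fin 16)),
        rectS9s x ≠ rectS x ∧ par4 (rectS9s x) = par4 (rectS x)) ∧
    (∀ x : Fin 16, rectS9s x ≠ rectS x → par4 (rectS9s x) = par4 (rectS x) →
        x ∈ ({0, 9, 14, 15} : Finset (Fin 16))) := by
  constructor
  · decide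
  · decide
end
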